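/- Let G be a finite group and α a partial action of G on a *-algebra A with ideals A_g and isomorphisms α_g : A_{g⁻¹} → A_g. In the partial crossed product A ⋊_α G (formal sums ∑ a_g u_g with a_g ∈ A_g, convolution (a_g u_g)(b_h u_h) = α_g(α_{g⁻¹}(a_g) b_h) u_{gh} and involution (a_g u_g)* = α_{g⁻¹}(a_g*) u_{g⁻¹}), the involution is an anti-multiplicative involution on homogeneous elements: ((a_g u_g)(b_h u_h))* = (b_h u_h)*(a_g u_g)*. -/
import Mathlib


/-- A partial action of a group `G` on a *-algebra `A`: ideals `D g ⊆ A` together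
with maps `θ g : A → A` (recorded as globally defined functions) whose restrictions
`θ g : D g⁻¹ → D g` are *-isomorphisms, with `θ 1 = id` and such that `θ (g*h)`
extends `θ g ∘ θ h` wherever the composition is defined. -/
structure PartialAction (G : Type*) [Group G] (A : Type*)
    [NonUnitalRing A] [StarRing A] where
  D : G → Set A
  θ : G → A → A
  D_one : D 1 = Set.univ
  θ_one : ∀ a : A, θ 1 a = a
  zero_mem : ∀ g : G, (0 : A) ∈ D g
  add_mem : ∀ g : G, ∀ x ∈ D g, ∀ y ∈ D g, x + y ∈ D g
  neg_mem : ∀ g : G, ∀ x ∈ D g, -x ∈ D g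
  mul_mem_left : ∀ g : G, ∀ a : A, ∀ x ∈ D g, a * x ∈ D g
  mul_mem_right : ∀ g : G, ∀ a : A, ∀ x ∈ D g, x * a ∈ D g
  star_mem : ∀ g : G, ∀ x ∈ D g, star x ∈ D g
  maps_to : ∀ g : G, ∀ x ∈ D g⁻¹, θ g x ∈ D g
  θ_inv : ∀ g : G, ∀ x ∈ D g⁻¹, θ g⁻¹ (θ g x) = x
  θ_add : ∀ g : G, ∀ x ∈ D g⁻¹, ∀ y ∈ D g⁻¹, θ g (x + y) = θ g x + θ g y
  θ_mul : ∀ g : G, ∀ x ∈ D g⁻¹, ∀ y ∈ D g⁻¹, θ g (x * y) = θ g x * θ g y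
  θ_star : ∀ g : G, ∀ x ∈ D g⁻¹, θ g (star x) = star (θ g x)
  θ_comp : ∀ g h : G, ∀ x ∈ D h⁻¹, θ h x ∈ D g⁻¹ →
    x ∈ D (g * h)⁻¹ ∧ θ (g * h) x = θ g (θ h x)

variable {G : Type*} [Group G] [Fintype G] [DecidableEq G]
  {A : Type*} [NonUnitalRing A] [StarRing A]

/-- Convolution product on the partial crossed product `A ⋊_α G`, whose elements
are formal sums `∑ a_g u_g` recorded as functions `G → A`:
`(a_g u_g)(b_h u_h) = α_g(α_{g⁻¹}(a_g) b_h) u_{gh}`. -/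
def conv (P : PartialAction G A) (f k : G → A) : G → A :=
  fun g => ∑ h : G, P.θ h (P.θ h⁻¹ (f h) * k (h⁻¹ * g))

/-- Involution on the partial crossed product: `(a_g u_g)* = α_{g⁻¹}(a_g*) u_{g⁻¹}`. -/
def st (P : PartialAction G A) (f : G → A) : G → A :=
  fun g => P.θ g (star (f g⁻¹))

/-- The homogeneous element `a u_g` of the partial crossed product. -/
def sm (a : A) (g : G) : G → A := fun k => if k = g then a else 0

lemma PartialAction.θ_zero (P : PartialAction G A) (g : G) : P.θ g 0 = 0 := by
  have h := P.θ_add g 0 (P.zero_mem _) 0 (P.zero_mem _)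
  rw [add_zero] at h
  exact left_eq_add.mp h

lemma conv_sm_sm (P : PartialAction G A) (a b : A) (g h : G) :
    conv P (sm a g) (sm b h) = sm (P.θ g (P.θ g⁻¹ a * b)) (g * h) := by
  funext k
  unfold conv sm
  rw [Finset.sum_eq_single g]
  · by_cases hk : k = g * h
    · simp [hk]
    · have hne : g⁻¹ * k ≠ h := by
        intro e; apply hk; rw [← e, mul_inv_cancel_left]
      simp [hk, hne, P.θ_zero]
  · intro x _ hx
    simp [hx, P.θ_zero]
  · simp

lemma st_sm (P : PartialAction G A) (a : A) (g : G) :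
    st P (sm a g) = sm (P.θ g⁻¹ (star a)) g⁻¹ := by
  funext k
  unfold st sm
  by_cases hk : k = g⁻¹
  · simp [hk]
  · have hne : k⁻¹ ≠ g := fun e => hk (by rw [← e, inv_inv])
    simp [hk, hne, P.θ_zero]

/-- In the partial crossed product `A ⋊_α G` of a partial action
`α` of a finite group `G` on a *-algebra `A`, the involution is anti-multiplicative
on homogeneous elements: `((a_g u_g)(b_h u_h))* = (b_h u_h)*(a_g u_g)*`. -/
theorem crossedProduct_star_antimul
    (P : PartialAction G A) {a b : A} {g h : G}
    (ha : a ∈ P.D g) (hb : b ∈ P.D h) :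
    st P (conv P (sm a g) (sm b h)) = conv P (st P (sm b h)) (st P (sm a g)) := by
  rw [conv_sm_sm, st_sm, st_sm, st_sm, conv_sm_sm]
  -- memberships
  have hsa : star a ∈ P.D g := P.star_mem g a ha
  have hsb : star b ∈ P.D h := P.star_mem h b hb
  have ha' : P.θ g⁻¹ (star a) ∈ P.D g⁻¹ := P.maps_to g⁻¹ (star a) (by rwa [inv_inv])
  have hx : P.θ g⁻¹ a ∈ P.D g⁻¹ := P.maps_to g⁻¹ a (by rwa [inv_inv])
  have hxb : P.θ g⁻¹ a * b ∈ P.D g⁻¹ := P.mul_mem_right g⁻¹ b _ hx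
  set y : A := star b * P.θ g⁻¹ (star a) with hy
  have hyg : y ∈ P.D g⁻¹ := P.mul_mem_left g⁻¹ (star b) _ ha'
  have hyh : y ∈ P.D h := P.mul_mem_right h (P.θ g⁻¹ (star a)) (star b) hsb
  -- star (θ g (θ g⁻¹ a * b)) = θ g y
  have hstar : star (P.θ g (P.θ g⁻¹ a * b)) = P.θ g y := by
    rw [← P.θ_star g _ hxb, star_mul]
    congr 2
    rw [← P.θ_star g⁻¹ a (by rwa [inv_inv])]
  -- LHS value
  have hθgy : P.θ g y ∈ P.D (g⁻¹)⁻¹ := by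
    rw [inv_inv]; exact P.maps_to g y hyg
  have hinv : P.θ g⁻¹ (P.θ g y) = y := P.θ_inv g y hyg
  have hcomp := P.θ_comp h⁻¹ g⁻¹ (P.θ g y) hθgy (by rw [hinv, inv_inv]; exact hyh)
  have hL : P.θ (g * h)⁻¹ (star (P.θ g (P.θ g⁻¹ a * b))) = P.θ h⁻¹ y := by
    rw [hstar, mul_inv_rev, hcomp.2, hinv]
  -- RHS value
  have hR : P.θ (h⁻¹)⁻¹ (P.θ h⁻¹ (star b)) = star b :=
    P.θ_inv h⁻¹ (star b) (by rwa [inv_inv])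
  rw [hL, hR, ← hy, mul_inv_rev]
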